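/- Let G be an n-vertex graph with minimum degree at least δ whose maximum independent set I has size n−k with δ+1 ≤ k, and let J' ⊆ J = V\I be a set of δ vertices each with at least (n−k)/(k−δ+1) neighbors in I. Then for any x > 0, the contribution to P(G,x) from independent sets meeting J' is at most (1+x)^δ · (1+x)^{n−δ−(n−k)/(k−δ+1)}. -/

import Mathlib

/-- A finset of vertices is independent: no edge inside. -/
def SimpleGraph.IsIndepFinset {V : Type*} (G : SimpleGraph V) (s : Finset V) : Prop :=
  ∀ v ∈ s, ∀ w ∈ s, ¬ G.Adj v w

/-- `indepCount G t` = number of independent sets of size `t` in `G`. -/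
noncomputable def indepCount {V : Type*} [Fintype V] (G : SimpleGraph V) (t : ℕ) : ℕ :=
  Nat.card {s : Finset V // s.card = t ∧ G.IsIndepFinset s}

/-- `indepTotal G` = total number of independent sets in `G` (including ∅). -/
noncomputable def indepTotal {V : Type*} [Fintype V] (G : SimpleGraph V) : ℕ :=
  Nat.card {s : Finset V // G.IsIndepFinset s}

open Classical in
/-- The independence polynomial `P(G,x) = Σ_t i_t(G) xᵗ`. -/
noncomputable def indPoly {V : Type*} [Fintype V] (G : SimpleGraph V) (x : ℝ) : ℝ :=
  ∑ s ∈ Finset.univ.filter (fun s : Finset V => G.IsIndepFinset s), x ^ s.card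

/-!
An independent set `S` meeting `J` splits into `T = S ∩ J ≠ ∅` and `S \ J`. For `v ∈ T`, the set
`S \ J` avoids `J` and every neighbour of `v`, at least `m` of which lie outside `J`; so the sets
with a given `T` contribute at most `x ^ |T| (1 + x) ^ (|V| - |J| - m)`, and summing over `T ⊆ J`
gives `(1 + x) ^ |J| (1 + x) ^ (|V| - |J| - m)`.
-/

open Finset

section PowersetSums

variable {α : Type*} {x : ℝ}

theorem Finset.sum_powerset_pow_card (F : Finset α) (x : ℝ) :
    ∑ u ∈ F.powerset, x ^ #u = (1 + x) ^ #F := by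
  simpa [add_comm] using sum_pow_mul_eq_add_pow x 1 F

theorem Finset.sum_pow_card_le_of_forall_subset (hx : 0 ≤ x) {𝒜 : Finset (Finset α)}
    {F : Finset α} (h𝒜 : ∀ u ∈ 𝒜, u ⊆ F) : ∑ u ∈ 𝒜, x ^ #u ≤ (1 + x) ^ #F := by
  rw [← sum_powerset_pow_card]
  exact sum_le_sum_of_subset_of_nonneg (fun u hu ↦ mem_powerset.2 (h𝒜 u hu))
    fun _ _ _ ↦ by positivity

variable [DecidableEq α]

/-- Within a fibre of `s ↦ s ∩ J`, a set is determined by its part outside `J`. -/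
theorem Finset.sum_pow_card_fiber_inter_le (hx : 0 ≤ x) (𝒜 : Finset (Finset α))
    (J T F : Finset α) (hF : ∀ s ∈ 𝒜, s ∩ J = T → s \ J ⊆ F) :
    ∑ s ∈ 𝒜 with s ∩ J = T, x ^ #s ≤ x ^ #T * (1 + x) ^ #F := by
  have hsplit : ∀ s ∈ 𝒜.filter (· ∩ J = T), x ^ #s = x ^ #T * x ^ #(s \ J) := by
    intro s hs
    rw [← pow_add, ← (mem_filter.1 hs).2, card_inter_add_card_sdiff]
  have hinj : Set.InjOn (· \ J) (𝒜.filter (· ∩ J = T) : Set (Finset α)) := by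
    intro s hs t ht hst
    rw [← sdiff_union_inter s J, ← sdiff_union_inter t J, (mem_filter.1 hs).2,
      (mem_filter.1 ht).2, show s \ J = t \ J from hst]
  rw [sum_congr rfl hsplit, ← mul_sum, ← sum_image (g := (· \ J)) (f := fun u ↦ x ^ #u) hinj]
  gcongr
  refine sum_pow_card_le_of_forall_subset hx fun u hu ↦ ?_
  obtain ⟨s, hs, rfl⟩ := mem_image.1 hu
  exact hF s (mem_filter.1 hs).1 (mem_filter.1 hs).2

end PowersetSums

namespace SimpleGraph

variable {V : Type*} [Fintype V] {G : SimpleGraph V} [DecidableRel G.Adj]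

theorem IsIndepFinset.disjoint_neighborFinset {s : Finset V} (hs : G.IsIndepFinset s) {v : V}
    (hv : v ∈ s) : Disjoint s (G.neighborFinset v) :=
  Finset.disjoint_left.2 fun {w} hw hvw ↦ hs v hv w hw ((mem_neighborFinset G v w).1 hvw)

variable [DecidableEq V]

theorem card_compl_sdiff_neighborFinset_sdiff (J : Finset V) (v : V) :
    (#((univ \ J) \ (G.neighborFinset v \ J)) : ℝ) =
      Fintype.card V - #J - #(G.neighborFinset v \ J) := by
  have hsub : G.neighborFinset v \ J ⊆ univ \ J := sdiff_subset_sdiff (subset_univ _) subset_rfl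
  rw [card_sdiff_of_subset hsub, Nat.cast_sub (card_le_card hsub), card_univ_sdiff,
    Nat.cast_sub (card_le_univ J)]

open Classical in
theorem sum_pow_card_indep_inter_nonempty_le {x : ℝ} (hx : 0 ≤ x) (J : Finset V) {m : ℝ}
    (hm : ∀ v ∈ J, m ≤ #(G.neighborFinset v \ J)) :
    ∑ s with G.IsIndepFinset s ∧ (s ∩ J).Nonempty, x ^ #s
      ≤ (1 + x) ^ #J * (1 + x) ^ ((Fintype.card V : ℝ) - #J - m) := by
  set 𝒜 : Finset (Finset V) := {s | G.IsIndepFinset s ∧ (s ∩ J).Nonempty}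
  set B : ℝ := (1 + x) ^ ((Fintype.card V : ℝ) - #J - m)
  have hfiber : ∀ T ∈ J.powerset, ∑ s ∈ 𝒜 with s ∩ J = T, x ^ #s ≤ x ^ #T * B := by
    intro T hT
    rcases T.eq_empty_or_nonempty with rfl | ⟨v, hvT⟩
    · rw [sum_eq_zero fun s hs ↦ absurd (mem_filter.1 hs).2
        (mem_filter.1 (mem_filter.1 hs).1).2.2.ne_empty]
      positivity
    have hvs : ∀ s, s ∩ J = T → v ∈ s := fun s hsT ↦ (mem_inter.1 (hsT ▸ hvT)).1
    refine (sum_pow_card_fiber_inter_le hx 𝒜 J T ((univ \ J) \ (G.neighborFinset v \ J))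
      fun s hs hsT w hw ↦ ?_).trans ?_
    · have hdisj := (mem_filter.1 hs).2.1.disjoint_neighborFinset (hvs s hsT)
      obtain ⟨hws, hwJ⟩ := mem_sdiff.1 hw
      exact mem_sdiff.2 ⟨mem_sdiff.2 ⟨mem_univ w, hwJ⟩,
        fun hwN ↦ Finset.disjoint_left.1 hdisj hws (mem_sdiff.1 hwN).1⟩
    · gcongr
      rw [← Real.rpow_natCast, card_compl_sdiff_neighborFinset_sdiff]
      exact Real.rpow_le_rpow_of_exponent_le (by linarith)
        (by linarith [hm v (mem_powerset.1 hT hvT)])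
  calc ∑ s ∈ 𝒜, x ^ #s
      = ∑ T ∈ J.powerset, ∑ s ∈ 𝒜 with s ∩ J = T, x ^ #s :=
        (sum_fiberwise_of_maps_to (fun _ _ ↦ mem_powerset.2 inter_subset_right) _).symm
    _ ≤ ∑ T ∈ J.powerset, x ^ #T * B := sum_le_sum hfiber
    _ = (1 + x) ^ #J * B := by rw [← sum_mul, sum_powerset_pow_card]

end SimpleGraph

open Classical in
theorem contribution_meeting_J' {V : Type*} [Fintype V] [DecidableEq V]
    (G : SimpleGraph V) [DecidableRel G.Adj] (n k δ : ℕ) (x : ℝ) (hx : 0 < x)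
    (hcard : Fintype.card V = n)
    (I : Finset V)
    (J' : Finset V) (hJ' : J' ⊆ Finset.univ \ I) (hJcard : J'.card = δ)
    (hnb : ∀ v ∈ J',
      ((n : ℝ) - k) / ((k : ℝ) - δ + 1) ≤ ((G.neighborFinset v ∩ I).card : ℝ)) :
    ∑ s ∈ Finset.univ.filter
        (fun s : Finset V => G.IsIndepFinset s ∧ (s ∩ J').Nonempty), x ^ s.card
      ≤ (1 + x) ^ δ * (1 + x) ^ ((n : ℝ) - δ - ((n : ℝ) - k) / ((k : ℝ) - δ + 1)) := by
  have hIJ' : ∀ v, G.neighborFinset v ∩ I ⊆ G.neighborFinset v \ J' := fun v w hw ↦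
    mem_sdiff.2 ⟨(mem_inter.1 hw).1, fun hwJ ↦ (mem_sdiff.1 (hJ' hwJ)).2 (mem_inter.1 hw).2⟩
  have hm : ∀ v ∈ J', ((n : ℝ) - k) / ((k : ℝ) - δ + 1) ≤ #(G.neighborFinset v \ J') :=
    fun v hv ↦ (hnb v hv).trans (by exact_mod_cast card_le_card (hIJ' v))
  simpa only [hJcard, hcard] using G.sum_pow_card_indep_inter_nonempty_le hx.le J' hm
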